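/- For every real h, Φ(h) = 1/2 + sgn(h)·√S, where S = (1/(2π)) Σ_{k=0}^∞ ((2k)!!/(2k+1)!!) · P(k+1, h²)/2^k. -/

import Mathlib

/-!
Write `F h = ∫₀ʰ e^{-t²/2} dt`, so that `Φ h = 1/2 + F h / √(2π)`. Expanding
`s e^{s²(1-u²)/2}` in powers of `s²(1-u²)/2` and integrating over `u ∈ [0, 1]` with the Wallis
integrals `∫₀¹ (1-u²)ᵏ du = 4ᵏ k!² / (2k+1)!` gives `e^{s²/2} F s = ∑ aₖ s^{2k+1}` with
`aₖ = 2ᵏ k! / (2k+1)!`. Hence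
`F h² = ∫₀ʰ 2 F s e^{-s²/2} ds = ∑ aₖ ∫₀ʰ 2 s^{2k+1} e^{-s²} ds = ∑ aₖ γ(k+1, h²)`,
and `aₖ γ(k+1, h²)` is the `k`-th term of the series. Taking square roots loses only the sign
of `F h`, which is the sign of `h`.
-/

open Real MeasureTheory

/-- Lower regularized incomplete gamma function P(a,x) = γ(a,x)/Γ(a). -/
noncomputable def regGammaP (a x : ℝ) : ℝ :=
  (∫ t in (0:ℝ)..x, t ^ (a - 1) * Real.exp (-t)) / Real.Gamma a

/-- Standard normal cdf. -/
noncomputable def stdCdf (x : ℝ) : ℝ :=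
  ∫ t in Set.Iic x, Real.exp (-t ^ 2 / 2) / Real.sqrt (2 * Real.pi)

/-- (2k)!! = 2^k k! -/
noncomputable def evenDF (k : ℕ) : ℝ := 2 ^ k * k.factorial

/-- (2k+1)!! = (2k+1)!/(2^k k!) -/
noncomputable def oddDF (k : ℕ) : ℝ := (2 * k + 1).factorial / (2 ^ k * k.factorial)

open scoped Nat

theorem integral_one_sub_sq_pow (n : ℕ) :
    ∫ u in (0:ℝ)..1, (1 - u ^ 2) ^ n = 4 ^ n * (n ! : ℝ) ^ 2 / (2 * n + 1)! := by
  have hsin (m : ℕ) :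
      ∫ u in (0:ℝ)..1, (1 - u ^ 2) ^ m = ∫ x in (0:ℝ)..π / 2, sin x ^ (2 * m + 1) := by
    simpa using (integral_sin_pow_odd_mul_cos_pow (a := 0) (b := π / 2) m 0).symm
  induction n with
  | zero => simp
  | succ n ih =>
    rw [hsin] at ih ⊢
    rw [show 2 * (n + 1) + 1 = (2 * n + 1) + 2 by ring, integral_sin_pow, ih]
    simp only [sin_zero, cos_pi_div_two, Nat.factorial_succ]
    push_cast
    field_simp
    ring

noncomputable def gaussIntegral (s : ℝ) : ℝ := ∫ t in (0:ℝ)..s, exp (-t ^ 2 / 2)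

noncomputable def gaussSeriesCoeff (k : ℕ) : ℝ := 2 ^ k * k ! / (2 * k + 1)!

theorem gaussSeriesCoeff_mul_pow_eq_integral (k : ℕ) (s : ℝ) :
    gaussSeriesCoeff k * s ^ (2 * k + 1) =
      ∫ u in (0:ℝ)..1, s * (s ^ 2 * (1 - u ^ 2) / 2) ^ k / k ! := by
  have hsep (u : ℝ) : s * (s ^ 2 * (1 - u ^ 2) / 2) ^ k / k ! =
      s * (s ^ 2 / 2) ^ k / k ! * (1 - u ^ 2) ^ k := by
    rw [show s ^ 2 * (1 - u ^ 2) / 2 = s ^ 2 / 2 * (1 - u ^ 2) by ring, mul_pow]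
    ring
  simp_rw [hsep, intervalIntegral.integral_const_mul, integral_one_sub_sq_pow, gaussSeriesCoeff,
    div_pow, show (4:ℝ) ^ k = 2 ^ k * 2 ^ k by rw [← mul_pow]; norm_num]
  field_simp
  ring

theorem integral_mul_exp_eq_exp_mul_gaussIntegral (s : ℝ) :
    ∫ u in (0:ℝ)..1, s * exp (s ^ 2 * (1 - u ^ 2) / 2) = exp (s ^ 2 / 2) * gaussIntegral s := by
  have hsplit (u : ℝ) :
      s * exp (s ^ 2 * (1 - u ^ 2) / 2) = exp (s ^ 2 / 2) * (s * exp (-(s * u) ^ 2 / 2)) := by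
    rw [← mul_left_comm, ← exp_add]; ring_nf
  simp_rw [hsplit, intervalIntegral.integral_const_mul]
  have hsubst := intervalIntegral.smul_integral_comp_mul_left (a := 0) (b := 1)
    (fun t ↦ exp (-t ^ 2 / 2)) s
  rw [smul_eq_mul, mul_zero, mul_one] at hsubst
  rw [hsubst, gaussIntegral]

theorem hasSum_gaussSeriesCoeff_mul_pow (s : ℝ) :
    HasSum (fun k ↦ gaussSeriesCoeff k * s ^ (2 * k + 1))
      (exp (s ^ 2 / 2) * gaussIntegral s) := by
  rw [← integral_mul_exp_eq_exp_mul_gaussIntegral]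
  simp_rw [gaussSeriesCoeff_mul_pow_eq_integral]
  refine intervalIntegral.hasSum_integral_of_dominated_convergence
    (fun k _ ↦ |s| * (s ^ 2 / 2) ^ k / k !)
    (fun k ↦ by fun_prop) (fun k ↦ ae_of_all _ fun u hu ↦ ?_)
    (ae_of_all _ fun _ _ ↦ ?_) intervalIntegrable_const (ae_of_all _ fun u _ ↦ ?_)
  · rw [Set.uIoc_of_le zero_le_one] at hu
    have h0 : 0 ≤ s ^ 2 * (1 - u ^ 2) / 2 := by
      have hu2 : 0 ≤ 1 - u ^ 2 := by nlinarith [hu.1, hu.2]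
      positivity
    rw [norm_div, norm_mul, norm_pow, Real.norm_of_nonneg h0, RCLike.norm_natCast, Real.norm_eq_abs]
    gcongr
    nlinarith [sq_nonneg s, sq_nonneg u]
  · simpa only [mul_div_assoc] using (summable_pow_div_factorial _).mul_left |s|
  · simpa only [mul_div_assoc, ← exp_eq_exp_ℝ] using
      (NormedSpace.expSeries_div_hasSum_exp _).mul_left s

theorem hasDerivAt_gaussIntegral (s : ℝ) : HasDerivAt gaussIntegral (exp (-s ^ 2 / 2)) s := by
  have hc : Continuous fun t : ℝ ↦ exp (-t ^ 2 / 2) := by fun_prop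
  exact intervalIntegral.integral_hasDerivAt_right (hc.intervalIntegrable 0 s)
    hc.stronglyMeasurable.stronglyMeasurableAtFilter hc.continuousAt

@[fun_prop]
theorem continuous_gaussIntegral : Continuous gaussIntegral :=
  continuous_iff_continuousAt.2 fun s ↦ (hasDerivAt_gaussIntegral s).continuousAt

theorem gaussIntegral_sq (s : ℝ) :
    gaussIntegral s ^ 2 = ∫ x in (0:ℝ)..s, 2 * gaussIntegral x * exp (-x ^ 2 / 2) := by
  have hderiv (x : ℝ) :
      HasDerivAt (fun x ↦ gaussIntegral x ^ 2) (2 * gaussIntegral x * exp (-x ^ 2 / 2)) x := by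
    simpa using (hasDerivAt_gaussIntegral x).fun_pow 2
  rw [intervalIntegral.integral_eq_sub_of_hasDerivAt (fun x _ ↦ hderiv x)
    (by apply Continuous.intervalIntegrable; fun_prop)]
  simp [gaussIntegral]

theorem integral_pow_mul_exp_neg_sq (k : ℕ) (s : ℝ) :
    ∫ t in (0:ℝ)..s ^ 2, t ^ k * exp (-t) =
      ∫ x in (0:ℝ)..s, 2 * exp (-x ^ 2) * x ^ (2 * k + 1) := by
  have hsubst := intervalIntegral.integral_comp_mul_deriv (a := 0) (b := s)
    (f := fun x ↦ x ^ 2) (f' := fun x ↦ 2 * x) (fun x _ ↦ by simpa using hasDerivAt_pow 2 x) (by fun_prop)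
    (g := fun t ↦ t ^ k * exp (-t)) (by fun_prop)
  beta_reduce at hsubst
  rw [zero_pow two_ne_zero] at hsubst
  rw [← hsubst]
  refine intervalIntegral.integral_congr fun x _ ↦ ?_
  simp only [Function.comp, ← pow_mul]
  ring

theorem hasSum_gaussSeriesCoeff_mul_integral (s : ℝ) :
    HasSum (fun k ↦ gaussSeriesCoeff k * ∫ t in (0:ℝ)..s ^ 2, t ^ k * exp (-t))
      (gaussIntegral s ^ 2) := by
  have hterm (k : ℕ) : gaussSeriesCoeff k * ∫ t in (0:ℝ)..s ^ 2, t ^ k * exp (-t) =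
      ∫ x in (0:ℝ)..s, 2 * exp (-x ^ 2) * (gaussSeriesCoeff k * x ^ (2 * k + 1)) := by
    rw [integral_pow_mul_exp_neg_sq, ← intervalIntegral.integral_const_mul]
    exact intervalIntegral.integral_congr fun x _ ↦ by ring
  simp_rw [hterm]
  rw [gaussIntegral_sq]
  refine intervalIntegral.hasSum_integral_of_dominated_convergence
    (fun k _ ↦ 2 * (gaussSeriesCoeff k * |s| ^ (2 * k + 1)))
    (fun k ↦ by fun_prop) (fun k ↦ ae_of_all _ fun x hx ↦ ?_)
    (ae_of_all _ fun _ _ ↦ ((hasSum_gaussSeriesCoeff_mul_pow |s|).mul_left 2).summable)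
    intervalIntegrable_const (ae_of_all _ fun x _ ↦ ?_)
  · have hxs : |x| ≤ |s| := by simpa using Set.abs_sub_left_of_mem_uIcc (Set.uIoc_subset_uIcc hx)
    have hcoeff : 0 ≤ gaussSeriesCoeff k := by unfold gaussSeriesCoeff; positivity
    calc ‖2 * exp (-x ^ 2) * (gaussSeriesCoeff k * x ^ (2 * k + 1))‖
        = 2 * exp (-x ^ 2) * (gaussSeriesCoeff k * |x| ^ (2 * k + 1)) := by
          rw [Real.norm_eq_abs, abs_mul, abs_mul, abs_mul, abs_pow, abs_two,
            abs_of_pos (exp_pos _), abs_of_nonneg hcoeff]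
      _ ≤ 2 * 1 * (gaussSeriesCoeff k * |s| ^ (2 * k + 1)) := by
          gcongr
          exact exp_le_one_iff.2 (neg_nonpos.2 (sq_nonneg x))
      _ = 2 * (gaussSeriesCoeff k * |s| ^ (2 * k + 1)) := by ring
  · have hexp : 2 * gaussIntegral x * exp (-x ^ 2 / 2) =
        2 * exp (-x ^ 2) * (exp (x ^ 2 / 2) * gaussIntegral x) := by
      rw [show -x ^ 2 / 2 = -x ^ 2 + x ^ 2 / 2 by ring, exp_add]
      ring
    rw [hexp]
    exact (hasSum_gaussSeriesCoeff_mul_pow x).mul_left _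

theorem gaussIntegral_nonneg {s : ℝ} (hs : 0 ≤ s) : 0 ≤ gaussIntegral s :=
  intervalIntegral.integral_nonneg hs fun _ _ ↦ (exp_pos _).le

theorem gaussIntegral_nonpos {s : ℝ} (hs : s ≤ 0) : gaussIntegral s ≤ 0 := by
  rw [gaussIntegral, intervalIntegral.integral_symm, neg_nonpos]
  exact intervalIntegral.integral_nonneg hs fun _ _ ↦ (exp_pos _).le

theorem integrable_exp_neg_sq_div_two : Integrable fun t : ℝ ↦ exp (-t ^ 2 / 2) := by
  simpa [neg_div, div_eq_inv_mul] using integrable_exp_neg_mul_sq (b := 1 / 2) one_half_pos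

theorem integral_Iic_zero_exp_neg_sq_div_two :
    ∫ t in Set.Iic (0:ℝ), exp (-t ^ 2 / 2) = √(2 * π) / 2 := by
  rw [← neg_zero, ← integral_comp_neg_Ioi, show 2 * π = π / (1 / 2) by ring,
    ← integral_gaussian_Ioi]
  congr with t
  ring_nf

theorem stdCdf_eq_half_add_gaussIntegral (h : ℝ) :
    stdCdf h = 1 / 2 + gaussIntegral h / √(2 * π) := by
  have hIic (x : ℝ) : IntegrableOn (fun t : ℝ ↦ exp (-t ^ 2 / 2)) (Set.Iic x) :=
    integrable_exp_neg_sq_div_two.integrableOn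
  have hsqrt : √(2 * π) ≠ 0 := by positivity
  rw [stdCdf, integral_div, gaussIntegral,
    ← intervalIntegral.integral_Iic_sub_Iic (hIic 0) (hIic h),
    integral_Iic_zero_exp_neg_sq_div_two]
  field_simp
  ring

theorem regGammaP_natCast_add_one (k : ℕ) (x : ℝ) :
    regGammaP (k + 1) x = (∫ t in (0:ℝ)..x, t ^ k * exp (-t)) / k ! := by
  simp_rw [regGammaP, Gamma_nat_eq_factorial, add_sub_cancel_right, rpow_natCast]

theorem evenDF_div_oddDF (k : ℕ) : evenDF k / oddDF k = 2 ^ k * k ! * gaussSeriesCoeff k := by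
  rw [evenDF, oddDF, gaussSeriesCoeff]
  field_simp

theorem stdCdf_series (h : ℝ) :
    stdCdf h = 1 / 2 + (if 0 ≤ h then (1:ℝ) else -1) *
      Real.sqrt ((1 / (2 * Real.pi)) *
        ∑' k : ℕ, (evenDF k / oddDF k) * regGammaP (k + 1) (h ^ 2) / 2 ^ k) := by
  have hterm (k : ℕ) : evenDF k / oddDF k * regGammaP (k + 1) (h ^ 2) / 2 ^ k =
      gaussSeriesCoeff k * ∫ t in (0:ℝ)..h ^ 2, t ^ k * exp (-t) := by
    rw [evenDF_div_oddDF, regGammaP_natCast_add_one]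
    field_simp
  rw [tsum_congr hterm, (hasSum_gaussSeriesCoeff_mul_integral h).tsum_eq,
    stdCdf_eq_half_add_gaussIntegral, one_div_mul_eq_div, sqrt_div' _ (by positivity),
    sqrt_sq_eq_abs]
  split_ifs with hh
  · rw [abs_of_nonneg (gaussIntegral_nonneg hh), one_mul]
  · rw [abs_of_nonpos (gaussIntegral_nonpos (not_le.1 hh).le)]
    ring
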